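/- Let 𝒜 be a deterministic Büchi automaton over the alphabet Σ ∪ {⋆}, let z ∈ Σ and d ≥ 1, and let w be an infinite word over Σ ∪ {⋆} such that every occurrence of ⋆ in w is preceded by a number of digits that is a multiple of d, and such that every digit of w whose digit-position (counting only non-⋆ letters) is congruent to d−1 modulo d equals z. Then 𝒜 accepts w if and only if 𝒜^{seq z} accepts the word obtained from w by replacing every digit whose digit-position is congruent to d−1 modulo d by □. -/

import Mathlib

/-- A deterministic Büchi automaton over alphabet `A` with states `Q`. -/
structure DBA (A : Type) (Q : Type) where
  delta : Q → A → Q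
  init : Q
  F : Set Q

namespace DBA

variable {A Q : Type}

/-- The transition function extended to finite words. -/
def deltaStar (M : DBA A Q) : Q → List A → Q
  | q, [] => q
  | q, a :: u => deltaStar M (M.delta q a) u

/-- The run of `M` on the infinite word `w`. -/
def run (M : DBA A Q) (w : ℕ → A) : ℕ → Q
  | 0 => M.init
  | n + 1 => M.delta (run M w n) (w n)

/-- `M` accepts `w` if some accepting state occurs infinitely often in the run. -/
def Accepts (M : DBA A Q) (w : ℕ → A) : Prop :=
  ∃ q ∈ M.F, ∀ N : ℕ, ∃ n, N ≤ n ∧ run M w n = q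

/-- The ω-language of `M`. -/
def Lang (M : DBA A Q) : Set (ℕ → A) := {w | M.Accepts w}

/-- `M` with initial state changed to `q`. -/
def start (M : DBA A Q) (q : Q) : DBA A Q := { M with init := q }

/-- `q'` is accessible from `q` (by a nonempty word). -/
def Reach (M : DBA A Q) (q q' : Q) : Prop :=
  ∃ u : List A, u ≠ [] ∧ deltaStar M q u = q'

/-- `M` is weak: `F` is a union of strongly connected components. -/
def Weak (M : DBA A Q) : Prop :=
  ∀ q ∈ M.F, ∀ q', M.Reach q q' → M.Reach q' q → q' ∈ M.F

/-- `M` is minimal: distinct states recognize distinct languages. -/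
def Minimal (M : DBA A Q) : Prop :=
  ∀ q q' : Q, q ≠ q' → (M.start q).Lang ≠ (M.start q').Lang

end DBA

/-- Concatenation of a finite word and an infinite word. -/
def cat {A : Type} (u : List A) (w : ℕ → A) : ℕ → A :=
  fun n => if h : n < u.length then u.get ⟨n, h⟩ else w (n - u.length)

/-- The value `⟨v⟩ = Σ_{i<|v|} v[i]·b^(|v|-1-i)` of a finite digit word. -/
noncomputable def natVal (b : ℕ) (v : List (Fin b)) : ℝ :=
  ∑ i : Fin v.length, ((v.get i : ℕ) : ℝ) * (b : ℝ) ^ (v.length - 1 - (i : ℕ))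

/-- The fractional value `⟨w⟩_f = Σ_{i≥0} w[i]·b^(-i-1)` of an infinite digit word. -/
noncomputable def fracVal (b : ℕ) (w : ℕ → Fin b) : ℝ :=
  ∑' i : ℕ, ((w i : ℕ) : ℝ) * (b : ℝ) ^ (-(i : ℤ) - 1)

/-- The word `𝐮⋆𝐰` over `Σ^d ∪ {⋆}`; `none` is the separator `⋆`. -/
def encWord {b d : ℕ} (u : List (Fin d → Fin b)) (w : ℕ → Fin d → Fin b) :
    ℕ → Option (Fin d → Fin b) :=
  cat (u.map some ++ [none]) (fun n => some (w n))

/-- The vector of reals encoded by `𝐮⋆𝐰`. -/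
noncomputable def vecVal {b d : ℕ} (u : List (Fin d → Fin b)) (w : ℕ → Fin d → Fin b) :
    Fin d → ℝ :=
  fun i => natVal b (u.map fun t => t i) + fracVal b (fun n => w n i)

/-- A language of words over `Σ^d ∪ {⋆}` is saturated if membership only depends on
the encoded vector of reals. -/
def Saturated {b d : ℕ} (L : Set (ℕ → Option (Fin d → Fin b))) : Prop :=
  ∀ (u : List (Fin d → Fin b)) (w : ℕ → Fin d → Fin b)
    (u' : List (Fin d → Fin b)) (w' : ℕ → Fin d → Fin b),
    vecVal u w = vecVal u' w' → encWord u w ∈ L → encWord u' w' ∈ L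

/-- The parallelization `par(𝒜)` of an automaton over `Σ ∪ {⋆}`. -/
def parDBA {Q : Type} {b : ℕ} (d : ℕ) (M : DBA (Option (Fin b)) Q) :
    DBA (Option (Fin d → Fin b)) Q where
  delta := fun q x =>
    match x with
    | none => M.delta q none
    | some t => M.deltaStar q (List.ofFn fun i => some (t i))
  init := M.init
  F := M.F

/-- Fill the `f`-th component of a tuple of `Σ^□_f` with the digit `z`. -/
def fixTuple {b d : ℕ} (f : Fin d) (z : Fin b) (t : {i : Fin d // i ≠ f} → Fin b) :
    Fin d → Fin b :=
  fun i => if h : i = f then z else t ⟨i, h⟩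

/-- The automaton `𝒜^{z@f}` over `Σ^□_f ∪ {⋆}`; a letter of `Σ^□_f` is represented by
its tuple of non-`f` components (the `f`-th component being `□`). -/
def fixDBA {Q : Type} {b d : ℕ} (M : DBA (Option (Fin d → Fin b)) Q) (f : Fin d) (z : Fin b) :
    DBA (Option ({i : Fin d // i ≠ f} → Fin b)) Q where
  delta := fun q x =>
    match x with
    | none => M.delta q none
    | some t => M.delta q (some (fixTuple f z t))
  init := M.init
  F := M.F

/-- `fix_{□@f}(𝐰)`: replace the `f`-th component of every non-`⋆` letter by `□`. -/
def eraseComp {b d : ℕ} (f : Fin d) (w : ℕ → Option (Fin d → Fin b)) :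
    ℕ → Option ({i : Fin d // i ≠ f} → Fin b) :=
  fun n => (w n).map fun t i => t i.val

/-- `fix_{z@f}(𝐰)`: replace the `f`-th component (`□`) of every non-`⋆` letter by `z`. -/
def fillComp {b d : ℕ} (f : Fin d) (z : Fin b) (w : ℕ → Option ({i : Fin d // i ≠ f} → Fin b)) :
    ℕ → Option (Fin d → Fin b) :=
  fun n => (w n).map (fixTuple f z)

/-- The automaton `𝒜^{seq z}`, over alphabet `Σ ∪ {□,⋆}` (here `none` is `⋆` and
`some none` is `□`), with states `(Q × {0,…,d−1}) ∪ {⊥}` (`none` is `⊥`). -/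
def seqDBA {Q : Type} {b : ℕ} (d : ℕ) (hd : 0 < d) (M : DBA (Option (Fin b)) Q) (z : Fin b) :
    DBA (Option (Option (Fin b))) (Option (Q × Fin d)) where
  delta := fun s x =>
    match s, x with
    | none, _ => none
    | some (q, i), none => some (M.delta q none, i)
    | some (q, i), some (some a) =>
        if h : (i : ℕ) + 1 < d then some (M.delta q (some a), ⟨(i : ℕ) + 1, h⟩) else none
    | some (q, i), some none =>
        if (i : ℕ) = d - 1 then some (M.delta q (some z), ⟨0, hd⟩) else none
  init := some (M.init, ⟨0, hd⟩)
  F := {s | ∃ q ∈ M.F, ∃ i : Fin d, s = some (q, i)}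

/-- Auxiliary function for flattening an infinite word of blocks:
`flatAux blk v n` is the pair (block index, offset inside the block) of position `n`. -/
def flatAux {A B : Type} (blk : A → List B) (v : ℕ → A) : ℕ → ℕ × ℕ
  | 0 => (0, 0)
  | n + 1 =>
      let p := flatAux blk v n
      if p.2 + 1 < (blk (v p.1)).length then (p.1, p.2 + 1) else (p.1 + 1, 0)

/-- Flattening of an infinite word of (nonempty) blocks. -/
def flatten {A B : Type} [Inhabited B] (blk : A → List B) (v : ℕ → A) : ℕ → B :=
  fun n => (blk (v (flatAux blk v n).1)).getD (flatAux blk v n).2 default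

/-- The block of a letter of `Σ^d ∪ {⋆}`: a `d`-tuple becomes its list of components,
`⋆` stays a single letter. -/
def parBlock {b d : ℕ} : Option (Fin d → Fin b) → List (Option (Fin b))
  | none => [none]
  | some t => List.ofFn fun i => some (t i)

/-- `seq(𝐯)`: the sequentialization of an infinite word over `Σ^d ∪ {⋆}`. -/
def seqWord {b d : ℕ} (v : ℕ → Option (Fin d → Fin b)) : ℕ → Option (Fin b) :=
  flatten parBlock v

/-- The block of a letter of `Σ^□_f ∪ {⋆}`, as a word over `Σ ∪ {□,⋆}`. -/
def sqBlock {b d : ℕ} (f : Fin d) :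
    Option ({i : Fin d // i ≠ f} → Fin b) → List (Option (Option (Fin b)))
  | none => [none]
  | some t => List.ofFn fun i : Fin d =>
      if h : i = f then some none else some (some (t ⟨i, h⟩))

/-- Number of non-`⋆` letters among the first `n` letters of `w`. -/
def digitCount {b : ℕ} (w : ℕ → Option (Fin b)) : ℕ → ℕ
  | 0 => 0
  | n + 1 => digitCount w n + (if w n = none then 0 else 1)

/-! `𝒜^{seq z}` simulates `𝒜` while counting digits modulo `d` in its second component; on the
boxed word, each `□` sits exactly where this counter is `d − 1` and the replaced digit was `z`, so
the run of `𝒜^{seq z}` is the run of `𝒜` paired with the counter and never reaches `⊥`. Since the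
counter takes finitely many values, an accepting state of `𝒜` recurs if and only if it recurs
together with some fixed counter value. -/

open Filter

theorem DBA.accepts_iff_frequently {A Q : Type} (M : DBA A Q) (w : ℕ → A) :
    M.Accepts w ↔ ∃ q ∈ M.F, ∃ᶠ n in atTop, M.run w n = q := by
  simp only [DBA.Accepts, frequently_atTop]

theorem DBA.accepts_iff_of_run_eq_some_prod {A B Q ι : Type} [Finite ι] (M : DBA A Q)
    (N : DBA B (Option (Q × ι))) (hF : N.F = {s | ∃ q ∈ M.F, ∃ i, s = some (q, i)})
    {w : ℕ → A} {v : ℕ → B} (c : ℕ → ι) (hrun : ∀ n, N.run v n = some (M.run w n, c n)) :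
    M.Accepts w ↔ N.Accepts v := by
  have hsplit : ∀ q n, M.run w n = q ↔ ∃ i, N.run v n = some (q, i) := by
    simp [hrun]
  simp only [DBA.accepts_iff_frequently, hF, hsplit, frequently_exists]
  constructor
  · rintro ⟨q, hq, i, hi⟩
    exact ⟨_, ⟨q, hq, i, rfl⟩, hi⟩
  · rintro ⟨_, ⟨q, hq, i, rfl⟩, hi⟩
    exact ⟨q, hq, i, hi⟩

theorem seqDBA_run_eq_some {Q : Type} {b : ℕ} (d : ℕ) (hd : 0 < d)
    (M : DBA (Option (Fin b)) Q) (z : Fin b) (w : ℕ → Option (Fin b))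
    (v : ℕ → Option (Option (Fin b))) (hstar : ∀ n, w n = none → v n = none)
    (hbox : ∀ n a, w n = some a → digitCount w n % d = d - 1 → a = z ∧ v n = some none)
    (hdigit : ∀ n a, w n = some a → digitCount w n % d ≠ d - 1 → v n = some (some a)) (n : ℕ) :
    (seqDBA d hd M z).run v n = some (M.run w n, ⟨digitCount w n % d, Nat.mod_lt _ hd⟩) := by
  induction n with
  | zero => simp [DBA.run, seqDBA, digitCount]
  | succ n ih =>
    rw [DBA.run, DBA.run, ih]
    cases hwn : w n with
    | none => simp [seqDBA, digitCount, hwn, hstar n hwn]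
    | some a =>
      have hcount : digitCount w (n + 1) = digitCount w n + 1 := by simp [digitCount, hwn]
      by_cases hlast : digitCount w n % d = d - 1
      · obtain ⟨rfl, hvn⟩ := hbox n a hwn hlast
        have hwrap : digitCount w (n + 1) % d = 0 := by
          rw [hcount, ← Nat.mod_add_mod, hlast, Nat.sub_add_cancel hd, Nat.mod_self]
        simp [seqDBA, hvn, hlast, hwrap]
      · have hlt : digitCount w n % d + 1 < d := by
          have := Nat.mod_lt (digitCount w n) hd
          omega
        have hstep : digitCount w (n + 1) % d = digitCount w n % d + 1 := by
          rw [hcount, ← Nat.mod_add_mod, Nat.mod_eq_of_lt hlt]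
        simp [seqDBA, hdigit n a hwn hlast, hlt, hstep]

theorem stmt8 {Q : Type} {b : ℕ} (d : ℕ) (hd : 0 < d)
    (M : DBA (Option (Fin b)) Q) (z : Fin b)
    (w : ℕ → Option (Fin b))
    (hz : ∀ n a, w n = some a → digitCount w n % d = d - 1 → a = z) :
    M.Accepts w ↔
      (seqDBA d hd M z).Accepts (fun n =>
        match w n with
        | none => none
        | some a => if digitCount w n % d = d - 1 then some none else some (some a)) :=
  M.accepts_iff_of_run_eq_some_prod (seqDBA d hd M z) rfl _ <|
    seqDBA_run_eq_some d hd M z w _ (fun n hn => by simp [hn])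
      (fun n a hn hlast => ⟨hz n a hn hlast, by simp [hn, hlast]⟩)
      (fun n a hn hlast => by simp [hn, hlast])
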